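/- arXiv:2511.21810 — 3 statements merged into one kernel-verified Lean document; each statement's English description precedes it below -/
import Mathlib

section
/- Let G be a finite abelian group with a nondegenerate Hermitian bicharacter χ such that χ(g,g) = 1 for all g ∈ G. Then there exists a subgroup H ≤ G with H = H' (H equals its own annihilator); consequently |G| = |H|². -/
/-- The annihilator of a set `S ⊆ G` with respect to a bicharacter `χ`. -/
def annihilator {G : Type*} [CommGroup G] (χ : G → G → ℂˣ) (S : Set G) : Set G :=
  {g : G | ∀ h ∈ S, χ h g = 1}

/-!
A maximal totally isotropic subgroup `H` is its own orthogonal: an element `g` orthogonal to `H`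
is also orthogonal to itself (`χ(g,g) = 1`) and, since `χ(a,b)χ(b,a) = χ(ab,ab) = 1` forces
orthogonality to be symmetric, `H ∪ {g}` generates a totally isotropic subgroup, so `g ∈ H` by
maximality. Duality of finite abelian groups then bounds `|G|` from both sides by `|H|²`:
restricting `χ(·, g)` to `H` embeds `G ⧸ H⊥ = G ⧸ H` into the dual of `H`, and by
nondegeneracy `h ↦ χ(h, ·)` embeds `H` into the dual of `G ⧸ H`.
-/

namespace MonoidHom

section Orthogonal

variable {G M : Type*} [CommGroup G] [CommGroup M] (B : G →* G →* M)

def orthogonal (S : Set G) : Subgroup G :=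
  ⨅ s ∈ S, (B s).ker

variable {B} in
theorem mem_orthogonal {S : Set G} {g : G} : g ∈ B.orthogonal S ↔ ∀ s ∈ S, B s g = 1 := by
  simp only [orthogonal, Subgroup.mem_iInf, mem_ker]

theorem orthogonal_closure (S : Set G) : B.orthogonal (Subgroup.closure S) = B.orthogonal S := by
  refine le_antisymm (fun g hg => mem_orthogonal.2 fun s hs => ?_) fun g hg => ?_
  · exact mem_orthogonal.1 hg s (Subgroup.subset_closure hs)
  · have : Subgroup.closure S ≤ (B.flip g).ker :=
      (Subgroup.closure_le _).2 fun s hs => mem_orthogonal.1 hg s hs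
    exact mem_orthogonal.2 fun s hs => this hs

def IsIsotropic (H : Subgroup G) : Prop :=
  H ≤ B.orthogonal H

theorem isIsotropic_closure {S : Set G} (hS : S ⊆ B.orthogonal S) :
    B.IsIsotropic (Subgroup.closure S) := by
  rw [IsIsotropic, orthogonal_closure]
  exact (Subgroup.closure_le _).2 hS

variable {B}

theorem apply_swap_eq_inv (hB : ∀ g, B g g = 1) (a b : G) : B b a = (B a b)⁻¹ := by
  have hab := hB (a * b)
  simp only [map_mul, mul_apply, hB a, hB b, one_mul, mul_one] at hab
  exact eq_inv_of_mul_eq_one_left hab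

theorem orthogonal_eq_of_maximal_isIsotropic (hB : ∀ g, B g g = 1) {H : Subgroup G}
    (hH : Maximal B.IsIsotropic H) : B.orthogonal H = H := by
  refine le_antisymm (fun g hg => ?_) hH.prop
  have hgH : ∀ h ∈ H, B h g = 1 := mem_orthogonal.1 hg
  have hpair : insert g (H : Set G) ⊆ B.orthogonal (insert g (H : Set G)) := by
    rintro x hx
    refine mem_orthogonal.2 fun y hy => ?_
    rcases hx with hx | hx <;> rcases hy with hy | hy
    · rw [hx, hy]; exact hB g
    · rw [hx]; exact hgH y hy
    · rw [hy, apply_swap_eq_inv hB, hgH x hx, inv_one]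
    · exact mem_orthogonal.1 (hH.prop hx) y hy
  have hle : H ≤ Subgroup.closure (insert g (H : Set G)) :=
    fun h hh => Subgroup.subset_closure (Set.mem_insert_of_mem g hh)
  exact hH.le_of_ge (B.isIsotropic_closure hpair) hle
    (Subgroup.subset_closure (Set.mem_insert g _))

end Orthogonal

section Card

variable {G M : Type*} [CommGroup G] [Finite G] [CommMonoid M]
  [HasEnoughRootsOfUnity M (Monoid.exponent G)] {B : G →* G →* Mˣ}

theorem card_le_card_mul_card_orthogonal (H : Subgroup G) :
    Nat.card G ≤ Nat.card H * Nat.card (B.orthogonal H) := by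
  have : HasEnoughRootsOfUnity M (Monoid.exponent H) :=
    .of_dvd M (Monoid.exponent_submonoid_dvd H.toSubmonoid)
  have hdual := CommGroup.card_monoidHom_of_hasEnoughRootsOfUnity H M
  have : Finite (H →* Mˣ) := Nat.finite_of_card_ne_zero (hdual ▸ Nat.card_pos.ne')
  let restrict := (domRestrictHom H Mˣ).comp B.flip
  have hker : restrict.ker = B.orthogonal H := by
    ext g
    simp [restrict, mem_orthogonal, DFunLike.ext_iff]
  calc Nat.card G = Nat.card restrict.range * Nat.card restrict.ker := by
        rw [restrict.ker.card_eq_card_quotient_mul_card_subgroup,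
          Nat.card_congr (QuotientGroup.quotientKerEquivRange restrict).toEquiv]
    _ ≤ Nat.card H * Nat.card (B.orthogonal H) := by
        rw [hker, ← hdual]
        exact Nat.mul_le_mul_right _ restrict.range.card_le_card_group

theorem card_le_card_quotient_of_isIsotropic (hB : Function.Injective B) {H : Subgroup G}
    (hH : B.IsIsotropic H) : Nat.card H ≤ Nat.card (G ⧸ H) := by
  have hdual := CommGroup.card_domRestrictHom_ker M H
  have : Finite (domRestrictHom H Mˣ).ker :=
    Nat.finite_of_card_ne_zero (hdual ▸ Nat.card_pos.ne')
  rw [← hdual]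
  refine Nat.card_le_card_of_injective (fun x => ⟨B x, ?_⟩) fun x y hxy =>
    Subtype.ext (hB (congrArg Subtype.val hxy))
  ext h
  exact congrArg Units.val (mem_orthogonal.1 (hH h.2) x x.2)

end Card

theorem coe_orthogonal {G : Type*} [CommGroup G] (B : G →* G →* ℂˣ) (S : Set G) :
    (B.orthogonal S : Set G) = annihilator (fun g => B g) S :=
  Set.ext fun _ => mem_orthogonal

end MonoidHom

theorem exists_lagrangian_subgroup_general
    (G : Type*) [CommGroup G] [Fintype G] (χ : G → G → ℂˣ)
    (hmul₁ : ∀ g₁ g₂ h : G, χ (g₁ * g₂) h = χ g₁ h * χ g₂ h)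
    (hmul₂ : ∀ g h₁ h₂ : G, χ g (h₁ * h₂) = χ g h₁ * χ g h₂)
    (hnd : ∀ g : G, (∀ h : G, χ g h = 1) → g = 1)
    (hdiag : ∀ g : G, χ g g = 1) :
    ∃ H : Subgroup G, (H : Set G) = annihilator χ (H : Set G) ∧
      Nat.card G = Nat.card H ^ 2 := by
  let B : G →* G →* ℂˣ := .mk' (fun g => .mk' (χ g) (hmul₂ g)) fun g₁ g₂ =>
    MonoidHom.ext (hmul₁ g₁ g₂)
  have hB : Function.Injective B :=
    (injective_iff_map_eq_one B).2 fun g hg => hnd g (DFunLike.congr_fun hg)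
  obtain ⟨H, -, hH⟩ := Finite.exists_le_maximal (p := B.IsIsotropic) (a := ⊥) bot_le
  have hself := MonoidHom.orthogonal_eq_of_maximal_isIsotropic hdiag hH
  refine ⟨H, (congrArg SetLike.coe hself).symm.trans (B.coe_orthogonal H), le_antisymm ?_ ?_⟩
  · simpa only [hself, sq] using MonoidHom.card_le_card_mul_card_orthogonal (B := B) H
  · calc Nat.card H ^ 2 ≤ Nat.card (G ⧸ H) * Nat.card H := by
          rw [sq]
          exact Nat.mul_le_mul_right _ (MonoidHom.card_le_card_quotient_of_isIsotropic hB hH.prop)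
      _ = Nat.card G := H.card_eq_card_quotient_mul_card_subgroup.symm

/-- For a finite abelian group `G` with a nondegenerate Hermitian
bicharacter `χ` which is trivial on the diagonal, there is a subgroup `H` equal
to its own annihilator; consequently `|G| = |H|²`. -/
theorem exists_lagrangian_subgroup
    (G : Type*) [CommGroup G] [Fintype G] (χ : G → G → ℂˣ)
    (hmul₁ : ∀ g₁ g₂ h : G, χ (g₁ * g₂) h = χ g₁ h * χ g₂ h)
    (hmul₂ : ∀ g h₁ h₂ : G, χ g (h₁ * h₂) = χ g h₁ * χ g h₂)
    (hnd : ∀ g : G, (∀ h : G, χ g h = 1) → g = 1)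
    (hherm : ∀ g h : G, (χ g h : ℂ) = (starRingEnd ℂ) ((χ h g : ℂ)))
    (hdiag : ∀ g : G, χ g g = 1) :
    ∃ H : Subgroup G, (H : Set G) = annihilator χ (H : Set G) ∧
      Nat.card G = Nat.card H ^ 2 :=
  exists_lagrangian_subgroup_general G χ hmul₁ hmul₂ hnd hdiag
end

section
/- Let A be a unital complex star-ring, V a self-adjoint unitary with V² = 1, and Z = (1+iV)/(1+i). For a,b ∈ A with V a V = a (a even) or V a V = -a (a odd), and similarly for b, the twisted commutation [a, ZbZ*] = 0 holds if and only if: ab = ba when at least one of a,b is even, and ab = -ba when both a and b are odd. -/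
/-- The grading twist `Z = (1 + i·V)/(1 + i)` built from the fermion parity `V`. -/
noncomputable def twistZ {A : Type*} [Ring A] [Algebra ℂ A] (V : A) : A :=
  (1 + Complex.I : ℂ)⁻¹ • ((1 : A) + Complex.I • V)

/-- For elements `a, b` of definite parity (`ea = true` meaning
even, i.e. `VaV = a`; `ea = false` meaning odd, i.e. `VaV = -a`), the twisted
commutation `[a, ZbZ*] = 0` holds iff `ab = ba` when at least one of `a, b` is
even, and iff `ab = -ba` when both are odd. -/
theorem twisted_commutation_iff_graded_commutation
    (A : Type*) [Ring A] [Algebra ℂ A] [StarRing A] [StarModule ℂ A]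
    (V : A) (hVsa : star V = V) (hV2 : V ^ 2 = 1)
    (a b : A) (ea eb : Bool)
    (ha : V * a * V = if ea then a else -a)
    (hb : V * b * V = if eb then b else -b) :
    (a * (twistZ V * b * star (twistZ V)) = (twistZ V * b * star (twistZ V)) * a)
      ↔ (if ea || eb then a * b = b * a else a * b = -(b * a)) := by
  have hVV : V * V = 1 := by rw [← pow_two, hV2]
  have hVinj : ∀ x y : A, V * x = V * y ↔ x = y := by
    intro x y
    constructor
    · intro h
      have := congrArg (fun z => V * z) h
      simpa [← mul_assoc, hVV] using this
    · intro h; rw [h]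
  have hIinj : ∀ x y : A, Complex.I • x = Complex.I • y ↔ x = y := by
    intro x y
    constructor
    · intro h
      have := congrArg (fun z => (Complex.I)⁻¹ • z) h
      simpa [smul_smul, inv_mul_cancel₀ Complex.I_ne_zero] using this
    · intro h; rw [h]
  have hVb : V * b = (if eb then b else -b) * V := by
    have := congrArg (fun z => z * V) hb
    simpa [mul_assoc, hVV] using this
  have hVa : V * a = (if ea then a else -a) * V := by
    have := congrArg (fun z => z * V) ha
    simpa [mul_assoc, hVV] using this
  have hstarZ : star (twistZ V)
      = (starRingEnd ℂ) (1 + Complex.I)⁻¹ • ((1 : A) - Complex.I • V) := by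
    simp [twistZ, star_smul, star_add, hVsa, sub_eq_add_neg]
  have hs : (1 + Complex.I)⁻¹ * (starRingEnd ℂ) (1 + Complex.I)⁻¹ = (2 : ℂ)⁻¹ := by
    rw [map_inv₀, ← mul_inv, Complex.mul_conj]
    norm_num [Complex.normSq_apply]
  have hZbZ : twistZ V * b * star (twistZ V)
      = if eb then b else Complex.I • (V * b) := by
    rw [hstarZ]
    show ((1 + Complex.I : ℂ)⁻¹ • ((1 : A) + Complex.I • V)) * b *
        ((starRingEnd ℂ) (1 + Complex.I)⁻¹ • ((1 : A) - Complex.I • V)) = _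
    rw [smul_mul_assoc, smul_mul_assoc, mul_smul_comm, smul_smul, hs]
    cases eb
    · -- odd case
      simp only [Bool.false_eq_true, reduceIte] at hb hVb ⊢
      have hbV : b * V = -(V * b) := by rw [hVb, neg_mul, neg_neg]
      have hb' : V * (b * V) = -b := by rw [← mul_assoc]; exact hb
      have hexp : ((1 : A) + Complex.I • V) * b * ((1 : A) - Complex.I • V)
          = (2 * Complex.I) • (V * b) := by
        simp only [add_mul, one_mul, mul_sub, mul_one, smul_mul_assoc,
          mul_smul_comm, smul_smul, mul_assoc]
        rw [hbV, show V * -(V * b) = -b from by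
          rw [mul_neg, ← mul_assoc, hVV, one_mul]]
        match_scalars <;> simp [Complex.I_sq] <;> ring
      rw [hexp, smul_smul,
        show (2 : ℂ)⁻¹ * (2 * Complex.I) = Complex.I by
          rw [← mul_assoc, inv_mul_cancel₀ (by norm_num : (2:ℂ) ≠ 0), one_mul]]
    · -- even case
      simp only [reduceIte] at hb hVb ⊢
      have hb' : V * (b * V) = b := by rw [← mul_assoc]; exact hb
      have hexp : ((1 : A) + Complex.I • V) * b * ((1 : A) - Complex.I • V)
          = (2 : ℂ) • b := by
        simp only [add_mul, one_mul, mul_sub, mul_one, smul_mul_assoc,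
          mul_smul_comm, smul_smul, mul_assoc]
        rw [hVb, hb']
        match_scalars <;> simp [Complex.I_sq] <;> ring
      rw [hexp, smul_smul, inv_mul_cancel₀ (by norm_num : (2:ℂ) ≠ 0), one_smul]
  rw [hZbZ]
  cases eb
  · simp only [Bool.false_eq_true, reduceIte, Bool.or_false] at hVa ⊢
    rw [mul_smul_comm, smul_mul_assoc, hIinj]
    cases ea
    · simp only [Bool.false_eq_true, reduceIte] at hVa ⊢
      have haV : a * V = -(V * a) := by rw [hVa, neg_mul, neg_neg]
      rw [← mul_assoc, haV, neg_mul, mul_assoc, mul_assoc,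
        neg_eq_iff_eq_neg, ← mul_neg, hVinj]
    · simp only [reduceIte] at hVa ⊢
      rw [← mul_assoc, hVa.symm, mul_assoc, mul_assoc, hVinj]
  · simp only [reduceIte, Bool.or_true]
end

section
/- Let G be a finite abelian group with a nondegenerate Hermitian bicharacter χ and suppose the diagonal homomorphism g ↦ χ(g,g) is trivial. If H ≤ G is a subgroup with H ⊊ H' (strictly contained in its annihilator), then there exists g ∈ H' \ H such that the subgroup generated by H and g is still contained in its own annihilator. -/
/-- For a finite abelian group `G` with a nondegenerate Hermitian
bicharacter `χ` which is trivial on the diagonal, any subgroup `H` strictly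
contained in its annihilator can be enlarged: there is `g ∈ H' \ H` such that
the subgroup generated by `H` and `g` is still contained in its own
annihilator. -/
theorem isotropic_subgroup_enlargement
    (G : Type*) [CommGroup G] [Fintype G] (χ : G → G → ℂˣ)
    (hmul₁ : ∀ g₁ g₂ h : G, χ (g₁ * g₂) h = χ g₁ h * χ g₂ h)
    (hmul₂ : ∀ g h₁ h₂ : G, χ g (h₁ * h₂) = χ g h₁ * χ g h₂)
    (hnd : ∀ g : G, (∀ h : G, χ g h = 1) → g = 1)
    (hherm : ∀ g h : G, (χ g h : ℂ) = (starRingEnd ℂ) ((χ h g : ℂ)))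
    (hdiag : ∀ g : G, χ g g = 1)
    (H : Subgroup G)
    (hH : (H : Set G) ⊂ annihilator χ (H : Set G)) :
    ∃ g ∈ annihilator χ (H : Set G) \ (H : Set G),
      ((Subgroup.closure (insert g (H : Set G)) : Subgroup G) : Set G)
        ⊆ annihilator χ ((Subgroup.closure (insert g (H : Set G)) : Subgroup G) : Set G) := by
  obtain ⟨hsub, hne⟩ := hH
  obtain ⟨g, hg', hgH⟩ : ∃ g, g ∈ annihilator χ (H : Set G) ∧ g ∉ (H : Set G) := by
    by_contra h
    push_neg at h
    exact hne fun x hx => h x hx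
  refine ⟨g, ⟨hg', hgH⟩, ?_⟩
  -- basic bicharacter facts
  have hone₂ : ∀ x : G, χ x 1 = 1 := by
    intro x
    have := hmul₂ x 1 1
    simp only [mul_one] at this
    exact left_eq_mul.mp this
  have hone₁ : ∀ x : G, χ 1 x = 1 := by
    intro x
    have := hmul₁ 1 1 x
    simp only [mul_one] at this
    exact left_eq_mul.mp this
  have hinv₂ : ∀ x y : G, χ x y⁻¹ = (χ x y)⁻¹ := by
    intro x y
    have := hmul₂ x y y⁻¹
    rw [mul_inv_cancel, hone₂] at this
    exact eq_inv_of_mul_eq_one_right this.symm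
  have hinv₁ : ∀ x y : G, χ x⁻¹ y = (χ x y)⁻¹ := by
    intro x y
    have := hmul₁ x x⁻¹ y
    rw [mul_inv_cancel, hone₁] at this
    exact eq_inv_of_mul_eq_one_right this.symm
  set S0 : Set G := insert g (H : Set G) with hS0
  have hbase : ∀ x ∈ S0, ∀ y ∈ S0, χ x y = 1 := by
    intro x hx y hy
    rcases hx with hx | hx <;> rcases hy with hy | hy
    · rw [hx, hy]; exact hdiag g
    · rw [hx]
      have h2 : χ y g = 1 := hg' y hy
      ext
      rw [hherm g y, h2]
      simp
    · rw [hy]; exact hg' x hx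
    · exact hsub hy x hx
  have key : ∀ a ∈ Subgroup.closure S0, ∀ b ∈ Subgroup.closure S0, χ a b = 1 := by
    have step : ∀ a ∈ S0, ∀ b ∈ Subgroup.closure S0, χ a b = 1 := by
      intro a ha b hb
      induction hb using Subgroup.closure_induction with
      | mem y hy => exact hbase a ha y hy
      | one => exact hone₂ a
      | mul y z _ _ hy hz => rw [hmul₂, hy, hz, mul_one]
      | inv y _ hy => rw [hinv₂, hy, inv_one]
    intro a ha b hb
    induction ha using Subgroup.closure_induction with
    | mem x hx => exact step x hx b hb
    | one => exact hone₁ b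
    | mul x y _ _ hx hy => rw [hmul₁, hx, hy, mul_one]
    | inv x _ hx => rw [hinv₁, hx, inv_one]
  intro x hx y hy
  exact key y hy x hx
end
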